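/- Let G and H be connected graphs each of order at least 3. If the direct product G × H is well-dominated, then γ(G × H) = γ(G)·n(H) = γ(H)·n(G); furthermore γ(G) = α(G) and γ(H) = α(H). -/

import Mathlib

open SimpleGraph

variable {V : Type*}

/-- Closed neighborhood of a vertex. -/
def closedNbhd (G : SimpleGraph V) (v : V) : Set V := insert v (G.neighborSet v)

/-- Closed neighborhood of a set of vertices. -/
def closedNbhdSet (G : SimpleGraph V) (A : Set V) : Set V := ⋃ a ∈ A, closedNbhd G a

/-- `D` is a dominating set of `G`. -/
def IsDomSet (G : SimpleGraph V) (D : Set V) : Prop :=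
  ∀ v, ∃ u ∈ D, v ∈ closedNbhd G u

/-- `D` is a minimal dominating set of `G`. -/
def IsMinimalDomSet (G : SimpleGraph V) (D : Set V) : Prop :=
  IsDomSet G D ∧ ∀ D' ⊆ D, IsDomSet G D' → D' = D

/-- The domination number `γ`. -/
noncomputable def domNum (G : SimpleGraph V) : ℕ :=
  sInf {n | ∃ D : Set V, IsDomSet G D ∧ D.ncard = n}

/-- The upper domination number `Γ`. -/
noncomputable def upperDomNum (G : SimpleGraph V) : ℕ :=
  sSup {n | ∃ D : Set V, IsMinimalDomSet G D ∧ D.ncard = n}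

/-- A graph is well-dominated if `γ = Γ`. -/
def WellDominated (G : SimpleGraph V) : Prop := domNum G = upperDomNum G

/-- `A` is an independent set of `G`. -/
def IsIndep (G : SimpleGraph V) (A : Set V) : Prop :=
  ∀ u ∈ A, ∀ v ∈ A, ¬ G.Adj u v

/-- `A` is a maximal independent set of `G`. -/
def IsMaxIndep (G : SimpleGraph V) (A : Set V) : Prop :=
  IsIndep G A ∧ ∀ B, IsIndep G B → A ⊆ B → B = A

/-- The independence number `α`. -/
noncomputable def indepNum (G : SimpleGraph V) : ℕ :=
  sSup {n | ∃ A : Set V, IsIndep G A ∧ A.ncard = n}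

/-- The strong product of two graphs. -/
def strongProd {α β : Type*} (G : SimpleGraph α) (H : SimpleGraph β) :
    SimpleGraph (α × β) where
  Adj x y := x ≠ y ∧ (x.1 = y.1 ∨ G.Adj x.1 y.1) ∧ (x.2 = y.2 ∨ H.Adj x.2 y.2)
  symm := by
    constructor
    rintro x y ⟨h1, h2, h3⟩
    refine ⟨h1.symm, ?_, ?_⟩
    · cases h2 with
      | inl h => exact Or.inl h.symm
      | inr h => exact Or.inr h.symm
    · cases h3 with
      | inl h => exact Or.inl h.symm
      | inr h => exact Or.inr h.symm
  loopless := by constructor; rintro x ⟨h1, _⟩; exact h1 rfl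

/-- The direct (tensor) product of two graphs. -/
def tensorProd {α β : Type*} (G : SimpleGraph α) (H : SimpleGraph β) :
    SimpleGraph (α × β) where
  Adj x y := G.Adj x.1 y.1 ∧ H.Adj x.2 y.2
  symm := ⟨fun _ _ h => ⟨h.1.symm, h.2.symm⟩⟩
  loopless := ⟨fun _ h => G.irrefl h.1⟩

/-- The corona `G ⊙ K₁`. -/
def corona {α : Type*} (G : SimpleGraph α) : SimpleGraph (α ⊕ α) :=
  SimpleGraph.fromRel (fun x y =>
    match x, y with
    | Sum.inl u, Sum.inl v => G.Adj u v
    | Sum.inl u, Sum.inr v => u = v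
    | _, _ => False)

/-- The private neighborhood `pn[u,D] = N[u] - N[D - {u}]`. -/
def privateNbhd (G : SimpleGraph V) (D : Set V) (u : V) : Set V :=
  {x | x ∈ closedNbhd G u ∧ ∀ d ∈ D, d ≠ u → x ∉ closedNbhd G d}

/-- A set `D` is open irredundant if every vertex of `D` has an external
private neighbor. -/
def IsOpenIrred (G : SimpleGraph V) (D : Set V) : Prop :=
  ∀ u ∈ D, ∃ x ∈ G.neighborSet u, ∀ d ∈ D, d ≠ u → x ∉ closedNbhd G d

/-!
Write `γ`, `Γ`, `α` for `domNum`, `upperDomNum`, `indepNum`. If `H` has no isolated vertex, then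
`D × V(H)` dominates `G × H` whenever `D` dominates `G`, and for an independent dominating set `A`
of `G` (e.g. a maximum independent set) `A × V(H)` is even a minimal dominating set, as each
`(a, k)` is dominated by itself only. Hence
`γ(G) n(H) ≥ γ(G × H) = Γ(G × H) ≥ α(G) n(H) ≥ γ(G) n(H)`,
so equality holds throughout; the other factor is handled through `G × H ≅ H × G`.
-/

section Domination

variable {W : Type*} {G : SimpleGraph V} {G' : SimpleGraph W}

lemma mem_closedNbhd_iff {v w : V} : w ∈ closedNbhd G v ↔ w = v ∨ G.Adj v w :=
  Set.mem_insert_iff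

lemma bddAbove_setOf_ncard [Finite V] (P : Set V → Prop) :
    BddAbove {n | ∃ D : Set V, P D ∧ D.ncard = n} :=
  ⟨Nat.card V, by rintro _ ⟨D, -, rfl⟩; exact Set.ncard_le_card D⟩

lemma isDomSet_univ (G : SimpleGraph V) : IsDomSet G Set.univ :=
  fun v => ⟨v, trivial, Set.mem_insert _ _⟩

lemma domNum_le_ncard {D : Set V} (hD : IsDomSet G D) : domNum G ≤ D.ncard :=
  Nat.sInf_le ⟨D, hD, rfl⟩

lemma exists_isDomSet_ncard_eq_domNum (G : SimpleGraph V) :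
    ∃ D : Set V, IsDomSet G D ∧ D.ncard = domNum G :=
  Nat.sInf_mem (s := {n | ∃ D : Set V, IsDomSet G D ∧ D.ncard = n})
    ⟨_, Set.univ, isDomSet_univ G, rfl⟩

lemma ncard_le_upperDomNum [Finite V] {D : Set V} (hD : IsMinimalDomSet G D) :
    D.ncard ≤ upperDomNum G :=
  le_csSup (bddAbove_setOf_ncard (IsMinimalDomSet G)) ⟨D, hD, rfl⟩

lemma ncard_le_indepNum [Finite V] {A : Set V} (hA : IsIndep G A) :
    A.ncard ≤ _root_.indepNum G :=
  le_csSup (bddAbove_setOf_ncard (IsIndep G)) ⟨A, hA, rfl⟩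

lemma exists_isIndep_ncard_eq_indepNum [Finite V] (G : SimpleGraph V) :
    ∃ A : Set V, IsIndep G A ∧ A.ncard = _root_.indepNum G :=
  Nat.sSup_mem (s := {n | ∃ A : Set V, IsIndep G A ∧ A.ncard = n})
    ⟨0, ∅, fun _ h => absurd h (Set.notMem_empty _), Set.ncard_empty V⟩ (bddAbove_setOf_ncard _)

lemma IsIndep.insert {A : Set V} {v : V} (hA : IsIndep G A)
    (hv : ∀ a ∈ A, ¬ G.Adj v a) : IsIndep G (insert v A) := by
  rintro u (rfl | hu) w (rfl | hw) huw
  · exact G.irrefl huw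
  · exact hv w hw huw
  · exact hv u hu huw.symm
  · exact hA u hu w hw huw

lemma IsIndep.isDomSet_of_ncard_eq_indepNum [Finite V] {A : Set V} (hA : IsIndep G A)
    (hmax : A.ncard = _root_.indepNum G) : IsDomSet G A := by
  intro v
  by_contra! hv
  have hvA : v ∉ A := fun h => hv v h (Set.mem_insert _ _)
  have hins := ncard_le_indepNum (hA.insert fun a ha hva => hv a ha (Or.inr hva.symm))
  rw [Set.ncard_insert_of_notMem hvA, hmax] at hins
  omega

lemma domNum_le_indepNum [Finite V] (G : SimpleGraph V) : domNum G ≤ _root_.indepNum G := by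
  obtain ⟨A, hA, hcard⟩ := exists_isIndep_ncard_eq_indepNum G
  exact hcard ▸ domNum_le_ncard (hA.isDomSet_of_ncard_eq_indepNum hcard)

lemma IsDomSet.image (e : G ≃g G') {D : Set V} (hD : IsDomSet G D) :
    IsDomSet G' (e '' D) := by
  intro w
  obtain ⟨u, hu, huw⟩ := hD (e.symm w)
  refine ⟨e u, Set.mem_image_of_mem e hu, mem_closedNbhd_iff.mpr ?_⟩
  rcases mem_closedNbhd_iff.mp huw with huw | huw
  · exact Or.inl (by rw [← huw, RelIso.apply_symm_apply])
  · exact Or.inr (by simpa using e.map_adj_iff.mpr huw)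

lemma IsMinimalDomSet.image (e : G ≃g G') {D : Set V} (hD : IsMinimalDomSet G D) :
    IsMinimalDomSet G' (e '' D) := by
  refine ⟨hD.1.image e, fun D' hD' hdom => ?_⟩
  have hpre : e.symm '' D' = D :=
    hD.2 _ (by rintro _ ⟨w, hw, rfl⟩; obtain ⟨v, hv, rfl⟩ := hD' hw; simpa using hv)
      (hdom.image e.symm)
  rw [← hpre, Set.image_image]
  simp

lemma setOf_ncard_congr (e : V ≃ W) {P : Set V → Prop} {Q : Set W → Prop}
    (hPQ : ∀ D, P D → Q (e '' D)) (hQP : ∀ D, Q D → P (e.symm '' D)) :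
    {n | ∃ D, P D ∧ D.ncard = n} = {n | ∃ D, Q D ∧ D.ncard = n} := by
  ext n
  constructor
  · rintro ⟨D, hD, rfl⟩
    exact ⟨e '' D, hPQ D hD, Set.ncard_image_of_injective D e.injective⟩
  · rintro ⟨D, hD, rfl⟩
    exact ⟨e.symm '' D, hQP D hD, Set.ncard_image_of_injective D e.symm.injective⟩

lemma domNum_congr (e : G ≃g G') : domNum G = domNum G' := by
  unfold domNum
  rw [setOf_ncard_congr e.toEquiv (fun _ hD => hD.image e) (fun _ hD => hD.image e.symm)]

lemma upperDomNum_congr (e : G ≃g G') : upperDomNum G = upperDomNum G' := by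
  unfold upperDomNum
  rw [setOf_ncard_congr e.toEquiv (fun _ hD => hD.image e) (fun _ hD => hD.image e.symm)]

lemma WellDominated.congr (e : G ≃g G') (h : WellDominated G) : WellDominated G' := by
  rwa [WellDominated, ← domNum_congr e, ← upperDomNum_congr e]

end Domination

section TensorProd

variable {α β : Type*} {G : SimpleGraph α} {H : SimpleGraph β}

def tensorProdComm (G : SimpleGraph α) (H : SimpleGraph β) :
    tensorProd G H ≃g tensorProd H G where
  toEquiv := Equiv.prodComm α β
  map_rel_iff' := and_comm

lemma IsDomSet.prod_univ (hH : ∀ k, ∃ k', H.Adj k k') {D : Set α} (hD : IsDomSet G D) :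
    IsDomSet (tensorProd G H) (D ×ˢ Set.univ) := by
  rintro ⟨g, k⟩
  obtain ⟨u, hu, hug⟩ := hD g
  rcases mem_closedNbhd_iff.mp hug with rfl | hug
  · exact ⟨(g, k), ⟨hu, trivial⟩, Set.mem_insert _ _⟩
  · obtain ⟨k', hk'⟩ := hH k
    exact ⟨(u, k'), ⟨hu, trivial⟩, Or.inr ⟨hug, hk'.symm⟩⟩

lemma IsIndep.isMinimalDomSet_prod_univ (hH : ∀ k, ∃ k', H.Adj k k') {A : Set α}
    (hA : IsIndep G A) (hdom : IsDomSet G A) :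
    IsMinimalDomSet (tensorProd G H) (A ×ˢ Set.univ) := by
  refine ⟨hdom.prod_univ hH, fun D hD hdomD => hD.antisymm ?_⟩
  rintro ⟨g, k⟩ ⟨hg, -⟩
  obtain ⟨⟨u, k'⟩, hu, hcl⟩ := hdomD (g, k)
  rcases mem_closedNbhd_iff.mp hcl with heq | hadj
  · exact heq ▸ hu
  · exact absurd hadj.1 (hA u (hD hu).1 g hg)

lemma domNum_tensorProd_le (hH : ∀ k, ∃ k', H.Adj k k') :
    domNum (tensorProd G H) ≤ domNum G * Nat.card β := by
  obtain ⟨D, hD, hcard⟩ := exists_isDomSet_ncard_eq_domNum G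
  simpa [hcard] using domNum_le_ncard (hD.prod_univ hH)

lemma indepNum_mul_card_le_upperDomNum [Finite α] [Finite β] (hH : ∀ k, ∃ k', H.Adj k k') :
    _root_.indepNum G * Nat.card β ≤ upperDomNum (tensorProd G H) := by
  obtain ⟨A, hA, hcard⟩ := exists_isIndep_ncard_eq_indepNum G
  simpa [hcard] using ncard_le_upperDomNum
    (hA.isMinimalDomSet_prod_univ hH (hA.isDomSet_of_ncard_eq_indepNum hcard))

lemma WellDominated.domNum_tensorProd_eq [Finite α] [Finite β] [Nonempty β]
    (hH : ∀ k, ∃ k', H.Adj k k') (h : WellDominated (tensorProd G H)) :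
    domNum (tensorProd G H) = domNum G * Nat.card β ∧ domNum G = _root_.indepNum G := by
  have hle : _root_.indepNum G * Nat.card β ≤ domNum G * Nat.card β :=
    calc _root_.indepNum G * Nat.card β ≤ upperDomNum (tensorProd G H) :=
          indepNum_mul_card_le_upperDomNum hH
      _ = domNum (tensorProd G H) := h.symm
      _ ≤ domNum G * Nat.card β := domNum_tensorProd_le hH
  have hγα : domNum G = _root_.indepNum G :=
    (domNum_le_indepNum G).antisymm (Nat.le_of_mul_le_mul_right hle Nat.card_pos)
  refine ⟨(domNum_tensorProd_le hH).antisymm ?_, hγα⟩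
  calc domNum G * Nat.card β = _root_.indepNum G * Nat.card β := by rw [hγα]
    _ ≤ upperDomNum (tensorProd G H) := indepNum_mul_card_le_upperDomNum hH
    _ = domNum (tensorProd G H) := h.symm

end TensorProd

/-- If `G × H` is well-dominated (both factors connected of order `≥ 3`), then
`γ(G × H) = γ(G)n(H) = γ(H)n(G)`, and `γ(G) = α(G)`, `γ(H) = α(H)`. -/
theorem stmt_7 {α β : Type*} [Fintype α] [Fintype β]
    (G : SimpleGraph α) (H : SimpleGraph β)
    (hG : G.Connected) (hH : H.Connected)
    (hα : 3 ≤ Fintype.card α) (hβ : 3 ≤ Fintype.card β)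
    (h : WellDominated (tensorProd G H)) :
    domNum (tensorProd G H) = domNum G * Fintype.card β ∧
    domNum (tensorProd G H) = domNum H * Fintype.card α ∧
    domNum G = _root_.indepNum G ∧ domNum H = _root_.indepNum H := by
  have : Nontrivial α := Fintype.one_lt_card_iff_nontrivial.mp (by omega)
  have : Nontrivial β := Fintype.one_lt_card_iff_nontrivial.mp (by omega)
  obtain ⟨hGH, hGα⟩ := h.domNum_tensorProd_eq hH.preconnected.exists_adj_of_nontrivial
  obtain ⟨hHG, hHα⟩ := (h.congr (tensorProdComm G H)).domNum_tensorProd_eq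
    hG.preconnected.exists_adj_of_nontrivial
  rw [← domNum_congr (tensorProdComm G H), Nat.card_eq_fintype_card] at hHG
  rw [Nat.card_eq_fintype_card] at hGH
  exact ⟨hGH, hHG, hGα, hHα⟩
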